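/- Let q be odd and let n, s be integers with 0 ≤ 2s ≤ n. Let I(n,s) be the number of n×n symmetric matrices with entries in {0,1}, with all diagonal entries 0, having exactly 2s entries equal to 1, no two of which lie in the same row or column. Then the number of n×n symmetric matrices over F_q of rank 2s with all diagonal entries zero satisfies sym_0(n, 2s) ≡ I(n,s)·(q−1)^s (mod (q−1)^{s+1}). -/

import Mathlib

/-!
Sort the matrices by their support pattern. If the pattern is a symmetric rook placement with
`2 s` rooks, every symmetric matrix with that support has rank `2 s`, and there are
`(q - 1) ^ s` of them, one nonzero value per pair of rooks.

For any other pattern the torus `(F^×)^n` acts on the fibre by `A ↦ D A D`, preserving symmetry,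
rank, zero diagonal and support. Choose a representative vertex in each connected component of
the support graph. The scalings that are trivial on the representatives act freely, because a
fixed scaling satisfies `d a * d b = 1` along every edge. There are more than `s` vertices which
are not representatives: the rank is at most the number of non-isolated vertices and at least
twice the number of nontrivial components, and a vertex with two neighbours lies in a component
with at least three vertices. Hence `(q - 1) ^ (s + 1)` divides the size of each such fibre.
-/

open Matrix Finset

theorem MulAction.card_group_dvd_card_of_free {G X : Type*} [Group G] [MulAction G X]
    [Finite G] [Finite X] (hfree : ∀ (g : G) (x : X), g • x = x → g = 1) :
    Nat.card G ∣ Nat.card X := by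
  classical
  have := Fintype.ofFinite G
  have := Fintype.ofFinite X
  rw [Nat.card_eq_fintype_card, Nat.card_eq_fintype_card,
    card_eq_sum_card_group_div_card_stabilizer G X]
  refine Finset.dvd_sum fun ω _ => ?_
  have : stabilizer G ω.out = ⊥ :=
    (Subgroup.eq_bot_iff_forall _).2 fun g hg => hfree g _ hg
  simp [this]

theorem Nat.card_fun_support_eq {β F : Type*} [Fintype β] [Zero F] [Finite F] (E : Set β) :
    Nat.card {f : β → F // Function.support f = E} = (Nat.card F - 1) ^ E.ncard := by
  classical
  have := Fintype.ofFinite F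
  have hfac : ∀ e, Nat.card {x : F // x ≠ 0 ↔ e ∈ E} =
      if e ∈ E then Nat.card F - 1 else 1 := by
    intro e
    split_ifs with he <;> simp [he, Nat.card_eq_fintype_card, Fintype.card_subtype_compl]
  rw [Nat.card_congr (Equiv.subtypeEquivRight fun f : β → F => Set.ext_iff)]
  simp only [Function.mem_support]
  rw [Nat.card_congr (Equiv.subtypePiEquivPi (p := fun e (x : F) => x ≠ 0 ↔ e ∈ E)),
    Nat.card_pi]
  simp_rw [hfac]
  rw [Finset.prod_ite, prod_const, prod_const_one, mul_one, Set.ncard_eq_toFinset_card']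
  congr 2
  ext
  simp

theorem Nat.card_pairs_eq_card_of_right_unique {ι : Type*} {r : ι → ι → Prop}
    (huniq : ∀ i j k, r i j → r i k → j = k) :
    Nat.card {p : ι × ι // r p.1 p.2} = Nat.card {i // ∃ j, r i j} := by
  refine Nat.card_congr (Equiv.ofBijective (fun p => ⟨p.1.1, p.1.2, p.2⟩) ⟨?_, ?_⟩)
  · rintro ⟨⟨i, j⟩, hij⟩ ⟨⟨i', j'⟩, hij'⟩ h
    obtain rfl : i = i' := congrArg Subtype.val h
    obtain rfl := huniq i j j' hij hij'
    rfl
  · rintro ⟨i, j, hij⟩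
    exact ⟨⟨(i, j), hij⟩, rfl⟩

namespace SimpleGraph

variable {V : Type*} (G : SimpleGraph V)

noncomputable def componentRep (v : V) : V := (G.connectedComponentMk v).out

def nontrivialComponentReps : Set V := {v | v ∈ G.support ∧ G.componentRep v = v}

variable {G} {u v w : V}

theorem reachable_componentRep (v : V) : G.Reachable v (G.componentRep v) :=
  ConnectedComponent.exact (Quot.out_eq _).symm

theorem Reachable.componentRep_eq (h : G.Reachable v w) : G.componentRep v = G.componentRep w := by
  rw [componentRep, componentRep, ConnectedComponent.sound h]

theorem componentRep_componentRep (v : V) : G.componentRep (G.componentRep v) = G.componentRep v :=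
  (reachable_componentRep v).componentRep_eq.symm

theorem Reachable.mem_support_of_ne (h : G.Reachable u v) (hne : u ≠ v) : v ∈ G.support := by
  rcases ((reachable_iff_reflTransGen u v).1 h).cases_tail with rfl | ⟨w, -, hwv⟩
  · exact absurd rfl hne
  · exact ⟨w, hwv.symm⟩

theorem componentRep_mem_support (hv : v ∈ G.support) : G.componentRep v ∈ G.support := by
  by_cases h : v = G.componentRep v
  · rwa [← h]
  · exact (reachable_componentRep v).mem_support_of_ne h

theorem Reachable.eq_one_of_adj_mul_eq_one {M : Type*} [MulOneClass M] {d : V → M}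
    (hadj : ∀ a b, G.Adj a b → d a * d b = 1) (h : G.Reachable u v) (hu : d u = 1) :
    d v = 1 := by
  rw [reachable_iff_reflTransGen] at h
  induction h with
  | refl => exact hu
  | tail _ hbc ih => simpa [ih] using hadj _ _ hbc

theorem exists_pairing_nontrivialComponentReps :
    ∃ h : Bool × G.nontrivialComponentReps → V, Function.Injective h ∧
      (∀ k, G.Adj (h (false, k)) (h (true, k))) ∧ ∀ x, G.componentRep (h x) = x.2 := by
  choose nb hnb using fun k : G.nontrivialComponentReps => k.2.1
  let h : Bool × G.nontrivialComponentReps → V := fun x => bif x.1 then nb x.2 else x.2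
  have hrep : ∀ x, G.componentRep (h x) = x.2 := by
    rintro ⟨_ | _, k⟩
    · exact k.2.2
    · exact ((Adj.reachable (hnb k)).componentRep_eq).symm.trans k.2.2
  refine ⟨h, ?_, fun k => hnb k, hrep⟩
  rintro ⟨b, k⟩ ⟨b', k'⟩ hkk'
  obtain rfl : k = k' := Subtype.ext ((hrep (b, k)).symm.trans (hkk' ▸ hrep (b', k')))
  cases b <;> cases b'
  · rfl
  · exact absurd hkk' (hnb k).ne
  · exact absurd hkk'.symm (hnb k).ne
  · rfl

variable [Finite V]

theorem ncard_support_eq :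
    G.support.ncard = G.nontrivialComponentReps.ncard + {v | G.componentRep v ≠ v}.ncard := by
  rw [← Set.ncard_union_eq]
  · congr 1
    ext v
    by_cases hv : G.componentRep v = v
    · simp [nontrivialComponentReps, hv]
    · have : v ∈ G.support := (reachable_componentRep v).symm.mem_support_of_ne hv
      simp [nontrivialComponentReps, hv, this]
  · exact Set.disjoint_left.2 fun v hC hR => hR hC.2

theorem two_mul_ncard_nontrivialComponentReps_lt {w' : V} (hw : G.Adj v w) (hw' : G.Adj v w')
    (hne : w ≠ w') : 2 * G.nontrivialComponentReps.ncard < G.support.ncard := by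
  obtain ⟨h, hinj, hadj, hrep⟩ := G.exists_pairing_nontrivialComponentReps
  have hrange : Set.range h ⊆ G.support := by
    rintro _ ⟨⟨b, k⟩, rfl⟩
    cases b
    · exact ⟨_, hadj k⟩
    · exact ⟨_, (hadj k).symm⟩
  let k₀ : G.nontrivialComponentReps :=
    ⟨G.componentRep v, componentRep_mem_support ⟨w, hw⟩, componentRep_componentRep v⟩
  obtain ⟨x, hx, hx₀⟩ :
      ∃ x ∈ ({v, w, w'} : Set V), x ∉ ({h (false, k₀), h (true, k₀)} : Set V) := by
    refine Set.exists_mem_notMem_of_ncard_lt_ncard ?_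
    rw [Set.ncard_eq_three.2 ⟨v, w, w', hw.ne, hw'.ne, hne, rfl⟩]
    exact (Set.ncard_insert_le _ _).trans_lt (by simp)
  have hxrep : G.componentRep x = k₀ := by
    rcases hx with rfl | rfl | rfl
    · rfl
    · exact hw.reachable.componentRep_eq.symm
    · exact hw'.reachable.componentRep_eq.symm
  have hxsupp : x ∈ G.support := by
    rcases hx with rfl | rfl | rfl
    exacts [⟨w, hw⟩, ⟨v, hw.symm⟩, ⟨v, hw'.symm⟩]
  calc 2 * G.nontrivialComponentReps.ncard = (Set.range h).ncard := by
        rw [Set.ncard_range_of_injective hinj, Nat.card_prod, Nat.card_eq_fintype_card (α := Bool),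
          Fintype.card_bool, Nat.card_coe_set_eq]
    _ < G.support.ncard := by
        refine Set.ncard_lt_ncard (Set.ssubset_iff_of_subset hrange |>.2 ⟨x, hxsupp, ?_⟩)
        rintro ⟨⟨b, k⟩, rfl⟩
        obtain rfl : k = k₀ := Subtype.ext ((hrep _).symm.trans hxrep)
        cases b <;> simp at hx₀

end SimpleGraph

section Matrices

variable {ι F : Type*} [Field F]

theorem Matrix.IsSymm.rank_eq_card_of_row_unique [Fintype ι] {A : Matrix ι ι F} (hA : A.IsSymm)
    (huniq : ∀ i j k, A i j ≠ 0 → A i k ≠ 0 → j = k) :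
    A.rank = Nat.card {i // ∃ j, A i j ≠ 0} := by
  classical
  have hdiag : ∀ i, (A * A) i i ≠ 0 ↔ ∃ j, A i j ≠ 0 := by
    intro i
    refine ⟨fun h => not_forall.1 fun h0 => h (by simp [mul_apply, h0]), fun ⟨j, hj⟩ => ?_⟩
    rw [mul_apply, Finset.sum_eq_single j (fun k _ hk => by
      by_contra h; exact hk (huniq i k j (left_ne_zero_of_mul h) hj)) (by simp), hA.apply i j]
    exact mul_ne_zero hj hj
  have hsq : A * A = diagonal fun i => (A * A) i i := by
    ext i k
    by_cases hik : i = k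
    · subst hik; simp
    · rw [diagonal_apply_ne _ hik, mul_apply]
      refine Finset.sum_eq_zero fun j _ => ?_
      by_contra h
      rw [← hA.apply i j] at h
      exact hik (huniq j i k (left_ne_zero_of_mul h) (right_ne_zero_of_mul h))
  apply le_antisymm
  · rw [Nat.card_eq_fintype_card, Fintype.card_subtype]
    refine rank_le_card_of_support_subset A _ fun i hi => ?_
    simpa [Function.mem_support, funext_iff] using hi
  · calc Nat.card {i // ∃ j, A i j ≠ 0} = (A * A).rank := by
          rw [hsq, rank_diagonal, Nat.card_eq_fintype_card]
          exact Fintype.card_congr (Equiv.subtypeEquivRight fun i => (hdiag i).symm)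
      _ ≤ A.rank := rank_mul_le_left A A

section Pattern

variable {R : Type*} [Zero R]

open Classical in
noncomputable def Matrix.supportPattern (A : Matrix ι ι R) : Matrix ι ι ℕ :=
  of fun i j => if A i j = 0 then 0 else 1

def Matrix.supportGraph (A : Matrix ι ι R) : SimpleGraph ι :=
  SimpleGraph.fromRel fun i j => A i j ≠ 0

variable {A : Matrix ι ι R} {i j : ι}

theorem Matrix.supportPattern_eq_one_iff : A.supportPattern i j = 1 ↔ A i j ≠ 0 := by
  by_cases h : A i j = 0 <;> simp [supportPattern, h]

theorem Matrix.supportPattern_eq_zero_iff : A.supportPattern i j = 0 ↔ A i j = 0 := by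
  by_cases h : A i j = 0 <;> simp [supportPattern, h]

theorem Matrix.supportPattern_eq_zero_or_one (i j : ι) :
    A.supportPattern i j = 0 ∨ A.supportPattern i j = 1 := by
  by_cases h : A i j = 0 <;> simp [supportPattern, h]

theorem Matrix.IsSymm.supportPattern (hA : A.IsSymm) : A.supportPattern.IsSymm :=
  IsSymm.ext fun i j => by simp only [Matrix.supportPattern, of_apply]; rw [hA.apply i j]

theorem Matrix.IsSymm.supportGraph_adj (hA : A.IsSymm) (hd : ∀ i, A i i = 0) :
    A.supportGraph.Adj i j ↔ A i j ≠ 0 := by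
  rw [supportGraph, SimpleGraph.fromRel_adj, hA.apply i j, or_self, and_iff_right_iff_imp]
  rintro h rfl
  exact h (hd i)

end Pattern

/-- The matrices counted by `I(n, s)`. -/
def IsSymmRookPlacement (s : ℕ) (M : Matrix ι ι ℕ) : Prop :=
  M.IsSymm ∧ (∀ i j, M i j = 0 ∨ M i j = 1) ∧ (∀ i, M i i = 0) ∧
    Nat.card {p : ι × ι // M p.1 p.2 = 1} = 2 * s ∧
    (∀ i j j', M i j = 1 → M i j' = 1 → j = j') ∧
    (∀ i i' j, M i j = 1 → M i' j = 1 → i = i')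

theorem isSymmRookPlacement_supportPattern_iff [Fintype ι] {s : ℕ} {A : Matrix ι ι F}
    (hA : A.IsSymm) (hd : ∀ i, A i i = 0)
    (huniq : ∀ i j k, A i j ≠ 0 → A i k ≠ 0 → j = k) :
    IsSymmRookPlacement s A.supportPattern ↔ A.rank = 2 * s := by
  have hcard : Nat.card {p : ι × ι // A.supportPattern p.1 p.2 = 1} = A.rank := by
    simp only [supportPattern_eq_one_iff]
    rw [Nat.card_pairs_eq_card_of_right_unique huniq, hA.rank_eq_card_of_row_unique huniq]
  rw [IsSymmRookPlacement, hcard]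
  refine ⟨fun h => h.2.2.2.1, fun h => ⟨hA.supportPattern, supportPattern_eq_zero_or_one,
    fun i => ?_, h, fun i j k hj hk => ?_, fun i k j hi hk => ?_⟩⟩
  · simp [supportPattern, hd i]
  · exact huniq i j k (supportPattern_eq_one_iff.1 hj) (supportPattern_eq_one_iff.1 hk)
  · rw [← hA.supportPattern.apply] at hi hk
    exact huniq j i k (supportPattern_eq_one_iff.1 hi) (supportPattern_eq_one_iff.1 hk)

theorem IsSymmRookPlacement.rank_eq [Fintype ι] {s : ℕ} {A : Matrix ι ι F} (hA : A.IsSymm)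
    (hM : IsSymmRookPlacement s A.supportPattern) : A.rank = 2 * s ∧ ∀ i, A i i = 0 := by
  have hd : ∀ i, A i i = 0 := fun i => supportPattern_eq_zero_iff.1 (hM.2.2.1 i)
  refine ⟨(isSymmRookPlacement_supportPattern_iff hA hd fun i j k hj hk => ?_).1 hM, hd⟩
  exact hM.2.2.2.2.1 i j k (supportPattern_eq_one_iff.2 hj) (supportPattern_eq_one_iff.2 hk)

section SupportGraph

variable [Fintype ι] {A : Matrix ι ι F} {i j k : ι}

theorem Matrix.IsSymm.rank_le_ncard_support (hA : A.IsSymm) (hd : ∀ i, A i i = 0) :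
    A.rank ≤ A.supportGraph.support.ncard := by
  classical
  rw [Set.ncard_eq_toFinset_card']
  refine rank_le_card_of_support_subset A _ fun i hi => ?_
  obtain ⟨j, hj⟩ : ∃ j, A i j ≠ 0 := by simpa [Function.mem_support, funext_iff] using hi
  simpa using ⟨j, (hA.supportGraph_adj hd).2 hj⟩

theorem Matrix.IsSymm.two_mul_ncard_nontrivialComponentReps_le_rank (hA : A.IsSymm)
    (hd : ∀ i, A i i = 0) : 2 * A.supportGraph.nontrivialComponentReps.ncard ≤ A.rank := by
  classical
  obtain ⟨h, -, hadj, hrep⟩ := A.supportGraph.exists_pairing_nontrivialComponentReps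
  -- The principal submatrix on the pairs (representative, chosen neighbour) has exactly one
  -- nonzero entry in each row.
  set B := A.submatrix h h
  have hB : ∀ x y, B x y ≠ 0 → y = (!x.1, x.2) := by
    intro x y hxy
    have hG : A.supportGraph.Adj (h x) (h y) := (hA.supportGraph_adj hd).2 hxy
    have h₂ : y.2 = x.2 :=
      Subtype.ext ((hrep y).symm.trans (hG.reachable.componentRep_eq.symm.trans (hrep x)))
    have h₁ : y.1 ≠ x.1 := fun h₁ => hG.ne (congrArg h (Prod.ext h₁ h₂)).symm
    exact Prod.ext (Bool.eq_not.2 h₁) h₂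
  have hrows : ∀ x, ∃ y, B x y ≠ 0 := by
    rintro ⟨b, k⟩
    refine ⟨(!b, k), (hA.supportGraph_adj hd).1 ?_⟩
    cases b
    exacts [hadj k, (hadj k).symm]
  calc 2 * A.supportGraph.nontrivialComponentReps.ncard = Nat.card {x // ∃ y, B x y ≠ 0} := by
        rw [Nat.card_congr (Equiv.subtypeUnivEquiv hrows), Nat.card_prod,
          Nat.card_eq_fintype_card (α := Bool), Fintype.card_bool, Nat.card_coe_set_eq]
    _ = B.rank := ((hA.submatrix h).rank_eq_card_of_row_unique fun x y z hy hz =>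
        (hB x y hy).trans (hB x z hz).symm).symm
    _ ≤ A.rank := rank_submatrix_le A h h

theorem Matrix.IsSymm.rank_lt_two_mul_ncard (hA : A.IsSymm) (hd : ∀ i, A i i = 0)
    (hj : A i j ≠ 0) (hk : A i k ≠ 0) (hjk : j ≠ k) :
    A.rank < 2 * {v | A.supportGraph.componentRep v ≠ v}.ncard := by
  have h₁ := hA.rank_le_ncard_support hd
  have h₂ := hA.two_mul_ncard_nontrivialComponentReps_le_rank hd
  have h₃ := A.supportGraph.ncard_support_eq
  have h₄ := SimpleGraph.two_mul_ncard_nontrivialComponentReps_lt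
    ((hA.supportGraph_adj hd).2 hj) ((hA.supportGraph_adj hd).2 hk) hjk
  omega

end SupportGraph

def Matrix.isSymmEquivSym2 {α : Type*} : {A : Matrix ι ι α // A.IsSymm} ≃ (Sym2 ι → α) :=
  (Equiv.subtypeEquivRight fun _ => IsSymm.ext_iff.trans (forall₂_congr fun _ _ => eq_comm)).trans
    Sym2.lift

theorem Matrix.supportPattern_eq_iff {R : Type*} [Zero R] {A : Matrix ι ι R}
    {M : Matrix ι ι ℕ} (hM : ∀ i j, M i j = 0 ∨ M i j = 1) :
    A.supportPattern = M ↔ ∀ i j, (A i j = 0 ↔ M i j = 0) := by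
  refine ⟨fun h i j => h ▸ supportPattern_eq_zero_iff.symm, fun h => ?_⟩
  ext i j
  rcases hM i j with hij | hij <;> rcases A.supportPattern_eq_zero_or_one i j with h' | h' <;>
    simp_all [supportPattern_eq_zero_iff, supportPattern_eq_one_iff]

theorem IsSymmRookPlacement.ncard_edgeSet [Fintype ι] {s : ℕ} {M : Matrix ι ι ℕ}
    (hM : IsSymmRookPlacement s M) : M.supportGraph.edgeSet.ncard = s := by
  classical
  obtain ⟨hMs, h01, hd, hcard, -⟩ := hM
  have hdarts : Fintype.card M.supportGraph.Dart = 2 * s := by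
    rw [← hcard, ← Nat.card_eq_fintype_card]
    refine Nat.card_congr
      ⟨fun d => ⟨d.toProd, ?_⟩, fun p => ⟨p.1, ?_⟩, fun _ => rfl, fun _ => rfl⟩
    · exact ((h01 _ _).resolve_left ((hMs.supportGraph_adj hd).1 d.adj))
    · exact (hMs.supportGraph_adj hd).2 (by simp [p.2])
  rw [SimpleGraph.dart_card_eq_twice_card_edges, SimpleGraph.edgeFinset,
    ← Set.ncard_eq_toFinset_card'] at hdarts
  omega

theorem IsSymmRookPlacement.card_isSymm_supportPattern_eq [Fintype ι] [Finite F] {s : ℕ}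
    {M : Matrix ι ι ℕ} (hM : IsSymmRookPlacement s M) :
    Nat.card {A : Matrix ι ι F // A.IsSymm ∧ A.supportPattern = M} = (Nat.card F - 1) ^ s := by
  have hsupp : ∀ A : {A : Matrix ι ι F // A.IsSymm}, A.1.supportPattern = M ↔
      Function.support (isSymmEquivSym2 A) = M.supportGraph.edgeSet := fun A => by
    rw [supportPattern_eq_iff hM.2.1, Set.ext_iff, Sym2.forall]
    refine forall₂_congr fun i j => ?_
    rw [Function.mem_support, SimpleGraph.mem_edgeSet, hM.1.supportGraph_adj hM.2.2.1, not_iff_not]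
    rfl
  rw [← hM.ncard_edgeSet, ← Nat.card_fun_support_eq,
    ← Nat.card_congr (Equiv.subtypeEquiv isSymmEquivSym2 hsupp)]
  exact Nat.card_congr (Equiv.subtypeSubtypeEquivSubtypeInter _ _).symm

section DiagCongr

variable {A : Matrix ι ι F} {d : ι → Fˣ} {i j : ι}

def Matrix.diagCongr (d : ι → Fˣ) (A : Matrix ι ι F) : Matrix ι ι F :=
  of fun i j => d i * d j * A i j

theorem Matrix.diagCongr_one (A : Matrix ι ι F) : A.diagCongr 1 = A := by
  ext; simp [diagCongr]

theorem Matrix.diagCongr_mul (d e : ι → Fˣ) (A : Matrix ι ι F) :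
    A.diagCongr (d * e) = (A.diagCongr e).diagCongr d := by
  ext; simp only [diagCongr, of_apply, Pi.mul_apply, Units.val_mul]; ring

theorem Matrix.diagCongr_apply_eq_zero_iff : A.diagCongr d i j = 0 ↔ A i j = 0 := by
  simp [diagCongr]

theorem Matrix.supportPattern_diagCongr : (A.diagCongr d).supportPattern = A.supportPattern := by
  ext i j
  by_cases h : A i j = 0 <;> simp [supportPattern, diagCongr_apply_eq_zero_iff, h]

theorem Matrix.IsSymm.diagCongr (hA : A.IsSymm) : (A.diagCongr d).IsSymm :=
  IsSymm.ext fun i j => by simp only [Matrix.diagCongr, of_apply, hA.apply i j, mul_comm]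

theorem Matrix.rank_diagCongr [Fintype ι] : (A.diagCongr d).rank = A.rank := by
  classical
  have hD : IsUnit (diagonal fun i => (d i : F)).det := by
    simp [isUnit_iff_ne_zero, Finset.prod_ne_zero_iff]
  have : A.diagCongr d = diagonal (fun i => (d i : F)) * A * diagonal (fun i => (d i : F)) := by
    ext i j
    simp only [diagCongr, of_apply, mul_diagonal, diagonal_mul]
    ring
  rw [this, rank_mul_eq_left_of_isUnit_det _ _ hD, rank_mul_eq_right_of_isUnit_det _ _ hD]

end DiagCongr

variable (F) in
def SymmRankFiber [Fintype ι] (r : ℕ) (M : Matrix ι ι ℕ) : Type _ :=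
  {A : Matrix ι ι F // (A.IsSymm ∧ A.rank = r ∧ ∀ i, A i i = 0) ∧ A.supportPattern = M}

instance [Fintype ι] (r : ℕ) (M : Matrix ι ι ℕ) :
    MulAction (ι → Fˣ) (SymmRankFiber F r M) where
  smul d A := ⟨A.1.diagCongr d, ⟨A.2.1.1.diagCongr, rank_diagCongr.trans A.2.1.2.1,
    fun i => diagCongr_apply_eq_zero_iff.2 (A.2.1.2.2 i)⟩, supportPattern_diagCongr.trans A.2.2⟩
  one_smul A := Subtype.ext (diagCongr_one A.1)
  mul_smul d e A := Subtype.ext (diagCongr_mul d e A.1)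

instance [Fintype ι] [Finite F] (r : ℕ) (M : Matrix ι ι ℕ) : Finite (SymmRankFiber F r M) :=
  Subtype.finite

def Set.extendByOneHom {α M : Type*} [Monoid M] (s : Set α) [DecidablePred (· ∈ s)] :
    (s → M) →* (α → M) where
  toFun g a := if h : a ∈ s then g ⟨a, h⟩ else 1
  map_one' := funext fun a => by split_ifs <;> rfl
  map_mul' g h := funext fun a => by
    change (if ha : a ∈ s then (g * h) ⟨a, ha⟩ else 1) =
      (if ha : a ∈ s then g ⟨a, ha⟩ else 1) * (if ha : a ∈ s then h ⟨a, ha⟩ else 1)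
    split_ifs <;> simp

theorem pow_ncard_dvd_card_symmRankFiber [Fintype ι] [Finite F] (r : ℕ) {A₀ : Matrix ι ι F}
    (hA₀ : A₀.IsSymm) (hd₀ : ∀ i, A₀ i i = 0) :
    (Nat.card F - 1) ^ {v | A₀.supportGraph.componentRep v ≠ v}.ncard ∣
      Nat.card (SymmRankFiber F r A₀.supportPattern) := by
  classical
  set G := A₀.supportGraph
  set R := {v | G.componentRep v ≠ v}
  have hadj : ∀ (A : SymmRankFiber F r A₀.supportPattern) a b, A.1 a b ≠ 0 ↔ G.Adj a b :=
    fun A a b => by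
      rw [hA₀.supportGraph_adj hd₀, Ne, Ne, ← supportPattern_eq_zero_iff,
        ← supportPattern_eq_zero_iff (A := A₀), A.2.2]
  let _ := MulAction.compHom (SymmRankFiber F r A₀.supportPattern) (R.extendByOneHom (M := Fˣ))
  have hfree : ∀ (g : R → Fˣ) (A : SymmRankFiber F r A₀.supportPattern),
      g • A = A → g = 1 := by
    intro g A hgA
    set d := R.extendByOneHom g
    have hedge : ∀ a b, G.Adj a b → d a * d b = 1 := by
      intro a b hab
      have h : A.1.diagCongr d a b = A.1 a b := congrFun (congrFun (congrArg Subtype.val hgA) a) b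
      refine Units.val_eq_one.1 (mul_right_cancel₀ ((hadj A a b).2 hab) ?_)
      simpa [diagCongr] using h
    have hroot : ∀ v, d (G.componentRep v) = 1 := fun v => by
      simp [d, Set.extendByOneHom, R, SimpleGraph.componentRep_componentRep]
    funext i
    simpa [d, Set.extendByOneHom, i.2] using
      (SimpleGraph.reachable_componentRep i.1).symm.eq_one_of_adj_mul_eq_one hedge (hroot i)
  simpa only [Nat.card_fun, Nat.card_units, Nat.card_coe_set_eq] using
    MulAction.card_group_dvd_card_of_free hfree

theorem card_symmRankFiber_of_isSymmRookPlacement [Fintype ι] [Finite F] {s : ℕ}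
    {M : Matrix ι ι ℕ} (hM : IsSymmRookPlacement s M) :
    Nat.card (SymmRankFiber F (2 * s) M) = (Nat.card F - 1) ^ s := by
  rw [← hM.card_isSymm_supportPattern_eq]
  refine Nat.card_congr (Equiv.subtypeEquivRight fun A => ⟨fun h => ⟨h.1.1, h.2⟩, ?_⟩)
  rintro ⟨hA, rfl⟩
  exact ⟨⟨hA, hM.rank_eq hA⟩, rfl⟩

theorem pow_succ_dvd_card_symmRankFiber [Fintype ι] [Finite F] {s : ℕ} {M : Matrix ι ι ℕ}
    (hM : ¬ IsSymmRookPlacement s M) :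
    (Nat.card F - 1) ^ (s + 1) ∣ Nat.card (SymmRankFiber F (2 * s) M) := by
  rcases isEmpty_or_nonempty (SymmRankFiber F (2 * s) M) with
    _ | ⟨⟨A₀, ⟨hA₀, hr₀, hd₀⟩, rfl⟩⟩
  · exact Nat.card_of_isEmpty (α := SymmRankFiber F (2 * s) M) ▸ dvd_zero _
  obtain ⟨i, j, k, hj, hk, hjk⟩ : ∃ i j k, A₀ i j ≠ 0 ∧ A₀ i k ≠ 0 ∧ j ≠ k := by
    by_contra! h
    exact hM ((isSymmRookPlacement_supportPattern_iff hA₀ hd₀ h).2 hr₀)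
  have hlt := hA₀.rank_lt_two_mul_ncard hd₀ hj hk hjk
  exact (pow_dvd_pow _ (by omega)).trans (pow_ncard_dvd_card_symmRankFiber _ hA₀ hd₀)

variable (ι) in
def zeroOneMatrices [Fintype ι] [DecidableEq ι] : Finset (Matrix ι ι ℕ) :=
  Fintype.piFinset fun _ => Fintype.piFinset fun _ => {0, 1}

theorem mem_zeroOneMatrices [Fintype ι] [DecidableEq ι] {M : Matrix ι ι ℕ} :
    M ∈ zeroOneMatrices ι ↔ ∀ i j, M i j = 0 ∨ M i j = 1 := by
  refine Fintype.mem_piFinset.trans (forall_congr' fun i => Fintype.mem_piFinset.trans ?_)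
  simp only [mem_insert, mem_singleton]

theorem card_eq_sum_card_symmRankFiber [Fintype ι] [DecidableEq ι] [Finite F] (r : ℕ) :
    Nat.card {A : Matrix ι ι F // A.IsSymm ∧ A.rank = r ∧ ∀ i, A i i = 0} =
      ∑ M ∈ zeroOneMatrices ι, Nat.card (SymmRankFiber F r M) := by
  classical
  have := Fintype.ofFinite F
  rw [Nat.card_eq_fintype_card, Fintype.card_subtype, card_eq_sum_card_fiberwise
    fun A _ => mem_zeroOneMatrices.2 A.supportPattern_eq_zero_or_one]
  refine sum_congr rfl fun M _ => ?_
  rw [filter_filter, SymmRankFiber, Nat.card_eq_fintype_card, Fintype.card_subtype]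

end Matrices

theorem stmt19_general (F : Type) [Field F] [Fintype F] (q : ℕ) (hq : Fintype.card F = q)
    (n s : ℕ) :
    Nat.card {A : Matrix (Fin n) (Fin n) F //
        A.IsSymm ∧ A.rank = 2 * s ∧ ∀ i, A i i = 0} ≡
      Nat.card {A : Matrix (Fin n) (Fin n) ℕ //
        A.IsSymm ∧ (∀ i j, A i j = 0 ∨ A i j = 1) ∧ (∀ i, A i i = 0) ∧
        Nat.card {p : Fin n × Fin n // A p.1 p.2 = 1} = 2 * s ∧
        (∀ i j j', A i j = 1 → A i j' = 1 → j = j') ∧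
        (∀ i i' j, A i j = 1 → A i' j = 1 → i = i')} * (q - 1) ^ s
      [MOD (q - 1) ^ (s + 1)] := by
  classical
  change _ ≡ Nat.card {M : Matrix (Fin n) (Fin n) ℕ // IsSymmRookPlacement s M} * _ [MOD _]
  rw [← hq, ← Nat.card_eq_fintype_card, card_eq_sum_card_symmRankFiber,
    ← sum_filter_add_sum_filter_not _ (IsSymmRookPlacement s)]
  have hrook : #((zeroOneMatrices (Fin n)).filter (IsSymmRookPlacement s)) =
      Nat.card {M : Matrix (Fin n) (Fin n) ℕ // IsSymmRookPlacement s M} := by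
    rw [← Set.ncard_coe_finset, ← Nat.card_coe_set_eq]
    exact Nat.card_congr (Equiv.subtypeEquivRight fun M => by
      simpa [mem_zeroOneMatrices] using fun hM : IsSymmRookPlacement s M => hM.2.1)
  have hrest : (Nat.card F - 1) ^ (s + 1) ∣ ∑ M ∈ (zeroOneMatrices (Fin n)).filter
      (¬ IsSymmRookPlacement s ·), Nat.card (SymmRankFiber F (2 * s) M) :=
    dvd_sum fun M hM => pow_succ_dvd_card_symmRankFiber (mem_filter.1 hM).2
  rw [sum_congr rfl fun M hM => card_symmRankFiber_of_isSymmRookPlacement (mem_filter.1 hM).2,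
    sum_const, smul_eq_mul, hrook]
  simpa only [add_zero] using (Nat.modEq_zero_iff_dvd.2 hrest).add_left _

theorem stmt19 (F : Type) [Field F] [Fintype F] (q : ℕ) (hq : Fintype.card F = q)
    (hodd : Odd q) (n s : ℕ) (hs : 2 * s ≤ n) :
    Nat.card {A : Matrix (Fin n) (Fin n) F //
        A.IsSymm ∧ A.rank = 2 * s ∧ ∀ i, A i i = 0} ≡
      Nat.card {A : Matrix (Fin n) (Fin n) ℕ //
        A.IsSymm ∧ (∀ i j, A i j = 0 ∨ A i j = 1) ∧ (∀ i, A i i = 0) ∧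
        Nat.card {p : Fin n × Fin n // A p.1 p.2 = 1} = 2 * s ∧
        (∀ i j j', A i j = 1 → A i j' = 1 → j = j') ∧
        (∀ i i' j, A i j = 1 → A i' j = 1 → i = i')} * (q - 1) ^ s
      [MOD (q - 1) ^ (s + 1)] :=
  stmt19_general F q hq n s
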